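/- For real κ with 0<κ<1, the function exp_κ(x) = (√(1+κ²x²) + κx)^{1/κ} is strictly convex on ℝ (its second derivative is positive everywhere). -/

import Mathlib

/-!
Since `√(1 + y²) + y = exp (arsinh y)`, we have `exp_κ x = exp (arsinh (κ x) / κ)`, whose derivative
is `exp_κ x / √(1 + κ²x²)`. Differentiating once more gives
`exp_κ x · (√(1 + κ²x²) - κ²x) / √(1 + κ²x²)³`, which is positive because
`κ²x ≤ |κx| < √(1 + κ²x²)` as soon as `|κ| ≤ 1`.
-/

noncomputable def kexp (κ x : ℝ) : ℝ :=
  (Real.sqrt (1 + κ^2 * x^2) + κ*x) ^ (1/κ : ℝ)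

open Real

lemma abs_lt_sqrt_one_add_sq (y : ℝ) : |y| < √(1 + y ^ 2) :=
  (lt_sqrt (abs_nonneg y)).2 (by rw [sq_abs]; linarith)

lemma sq_mul_lt_sqrt_one_add_sq {κ : ℝ} (hκ : |κ| ≤ 1) (x : ℝ) :
    κ ^ 2 * x < √(1 + (κ * x) ^ 2) :=
  calc κ ^ 2 * x ≤ |κ| ^ 2 * |x| := by rw [sq_abs]; gcongr; exact le_abs_self x
    _ ≤ |κ| * |x| := by gcongr; exact pow_le_of_le_one (abs_nonneg κ) hκ two_ne_zero
    _ = |κ * x| := (abs_mul κ x).symm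
    _ < √(1 + (κ * x) ^ 2) := abs_lt_sqrt_one_add_sq _

lemma hasDerivAt_sqrt_one_add_sq_mul (κ x : ℝ) :
    HasDerivAt (fun x => √(1 + (κ * x) ^ 2)) (κ ^ 2 * x / √(1 + (κ * x) ^ 2)) x := by
  have h : HasDerivAt (fun x => 1 + (κ * x) ^ 2) (2 * (κ * x) * κ) x := by
    simpa using (((hasDerivAt_id x).const_mul κ).pow 2).const_add 1
  convert h.sqrt (by positivity) using 1
  field_simp

lemma kexp_eq_exp_arsinh (κ x : ℝ) : kexp κ x = exp (arsinh (κ * x) / κ) := by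
  rw [kexp, ← mul_pow, add_comm, ← exp_arsinh, ← exp_mul, mul_one_div]

lemma kexp_pos (κ x : ℝ) : 0 < kexp κ x := by
  rw [kexp_eq_exp_arsinh]; exact exp_pos _

lemma hasDerivAt_kexp {κ : ℝ} (hκ : κ ≠ 0) (x : ℝ) :
    HasDerivAt (kexp κ) (kexp κ x / √(1 + (κ * x) ^ 2)) x := by
  have h : HasDerivAt (fun x => arsinh (κ * x) / κ) (√(1 + (κ * x) ^ 2))⁻¹ x :=
    ((hasDerivAt_id' x).const_mul κ).arsinh.div_const κ |>.congr_deriv (by simp [field])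
  rw [kexp_eq_exp_arsinh κ x, funext (kexp_eq_exp_arsinh κ)]
  exact h.exp

lemma deriv_kexp {κ : ℝ} (hκ : κ ≠ 0) :
    deriv (kexp κ) = fun x => kexp κ x / √(1 + (κ * x) ^ 2) :=
  funext fun x => (hasDerivAt_kexp hκ x).deriv

lemma hasDerivAt_deriv_kexp {κ : ℝ} (hκ : κ ≠ 0) (x : ℝ) :
    HasDerivAt (deriv (kexp κ))
      (kexp κ x * (√(1 + (κ * x) ^ 2) - κ ^ 2 * x) / √(1 + (κ * x) ^ 2) ^ 3) x := by
  have hs : √(1 + (κ * x) ^ 2) ≠ 0 := by positivity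
  rw [deriv_kexp hκ]
  refine (hasDerivAt_kexp hκ x).fun_div (hasDerivAt_sqrt_one_add_sq_mul κ x) hs |>.congr_deriv ?_
  field_simp

lemma deriv_deriv_kexp_pos {κ : ℝ} (hκ : κ ≠ 0) (hκ1 : |κ| ≤ 1) (x : ℝ) :
    0 < deriv (deriv (kexp κ)) x := by
  rw [(hasDerivAt_deriv_kexp hκ x).deriv]
  have hkexp := kexp_pos κ x
  have hnum := sub_pos.2 (sq_mul_lt_sqrt_one_add_sq hκ1 x)
  positivity

theorem kexp_strictConvex (κ : ℝ) (h0 : 0 < κ) (h1 : κ < 1) :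
    StrictConvexOn ℝ Set.univ (kexp κ) ∧
    ∀ x : ℝ, 0 < deriv (deriv (kexp κ)) x := by
  have hpos := deriv_deriv_kexp_pos h0.ne' ((abs_of_pos h0).trans_le h1.le)
  have hdiff : Differentiable ℝ (kexp κ) := fun x => (hasDerivAt_kexp h0.ne' x).differentiableAt
  exact ⟨strictConvexOn_univ_of_deriv2_pos hdiff.continuous hpos, hpos⟩
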